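/- Let p ≥ 2. Every element x ∈ F(p) admits exactly one normal form: there exist unique data n, m ≥ 0, indices i₁ < ⋯ < iₙ and j₁ < ⋯ < jₘ, and exponents r₁,…,rₙ ≥ 1 and s₁,…,sₘ ≥ 1 with iₙ ≠ jₘ when n,m ≥ 1, such that x = x_{i₁}^{r₁}⋯x_{iₙ}^{rₙ}·x_{jₘ}^{-sₘ}⋯x_{j₁}^{-s₁} and such that whenever some generator x_i and its inverse x_i⁻¹ both occur in the expression, at least one of x_{i+1}, …, x_{i+p-1} or one of their inverses also occurs. -/

import Mathlib

open scoped BigOperators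

/-- Relators of Thompson's group `F(p)`: `x_i⁻¹ x_j x_i x_{j+p-1}⁻¹` for `i < j`. -/
def thompsonRels (p : ℕ) : Set (FreeGroup ℕ) :=
  { rel | ∃ i j : ℕ, i < j ∧
      rel = (FreeGroup.of i)⁻¹ * FreeGroup.of j * FreeGroup.of i *
        (FreeGroup.of (j + p - 1))⁻¹ }

/-- Thompson's group `F(p)`, presented with generators `x_i` (`i : ℕ`) and relations
`x_i⁻¹ · x_j · x_i = x_{j+p-1}` for `i < j`. -/
def FP (p : ℕ) : Type := PresentedGroup (thompsonRels p)

instance (p : ℕ) : Group (FP p) :=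
  inferInstanceAs (Group (PresentedGroup (thompsonRels p)))

/-- The generator `x_i` of `F(p)`. -/
def xg (p : ℕ) (i : ℕ) : FP p := PresentedGroup.of (rels := thompsonRels p) i

/-- Word length of `x : G` with respect to a set `S` of generators: the least length of a
word in elements of `S ∪ S⁻¹` whose product is `x`. -/
noncomputable def wordLength {G : Type*} [Group G] (S : Set G) (x : G) : ℕ :=
  sInf { n : ℕ | ∃ w : List G, w.length = n ∧ (∀ g ∈ w, g ∈ S ∨ g⁻¹ ∈ S) ∧ w.prod = x }

/-- The word length `|x|_p` on `F(p)`, with respect to the generators `x_0, …, x_{p-1}`. -/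
noncomputable def wlen (p : ℕ) (x : FP p) : ℕ :=
  wordLength { g : FP p | ∃ i, i < p ∧ g = xg p i } x

/-- The data of a candidate normal form
`x_{i₁}^{r₁} ⋯ x_{iₙ}^{rₙ} · x_{jₘ}^{-sₘ} ⋯ x_{j₁}^{-s₁}` in `F(p)`. -/
structure NFData (p : ℕ) where
  n : ℕ
  m : ℕ
  i : Fin n → ℕ
  r : Fin n → ℕ
  j : Fin m → ℕ
  s : Fin m → ℕ

namespace NFData

variable {p : ℕ}

/-- The element of `F(p)` represented by the normal form data, namely
`x_{i₁}^{r₁} ⋯ x_{iₙ}^{rₙ} · (x_{j₁}^{s₁} ⋯ x_{jₘ}^{sₘ})⁻¹`. -/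
def elem (d : NFData p) : FP p :=
  (List.ofFn fun k => xg p (d.i k) ^ d.r k).prod *
    ((List.ofFn fun l => xg p (d.j l) ^ d.s l).prod)⁻¹

/-- The generator with index `a` occurs in `d` (with positive or negative exponent). -/
def Occurs (d : NFData p) (a : ℕ) : Prop :=
  (∃ k, d.i k = a) ∨ (∃ l, d.j l = a)

/-- `d` is a normal form of `x ∈ F(p)`: the indices are strictly increasing, the exponents
are at least `1`, `iₙ ≠ jₘ` when both parts are nonempty, whenever a generator and its
inverse both occur one of the following `p-1` generators (or its inverse) occurs as well,
and the corresponding product equals `x`. -/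
def IsNormalFormOf (d : NFData p) (x : FP p) : Prop :=
  StrictMono d.i ∧ StrictMono d.j ∧
    (∀ k, 1 ≤ d.r k) ∧ (∀ l, 1 ≤ d.s l) ∧
    (∀ (hn : 0 < d.n) (hm : 0 < d.m),
      d.i ⟨d.n - 1, Nat.sub_lt hn Nat.one_pos⟩ ≠ d.j ⟨d.m - 1, Nat.sub_lt hm Nat.one_pos⟩) ∧
    (∀ a : ℕ, (∃ k, d.i k = a) → (∃ l, d.j l = a) →
      ∃ b : ℕ, a < b ∧ b ≤ a + p - 1 ∧ d.Occurs b) ∧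
    x = d.elem

/-- The quantity `D(x) = r₁ + ⋯ + rₙ + s₁ + ⋯ + sₘ + iₙ + jₘ` (the terms `iₙ`, `jₘ` being
omitted when `n = 0`, resp. `m = 0`). -/
def D (d : NFData p) : ℕ :=
  (∑ k, d.r k) + (∑ l, d.s l) +
    (if hn : 0 < d.n then d.i ⟨d.n - 1, Nat.sub_lt hn Nat.one_pos⟩ else 0) +
    (if hm : 0 < d.m then d.j ⟨d.m - 1, Nat.sub_lt hm Nat.one_pos⟩ else 0)

end NFData

/-- The tail sum `r_k + r_{k+1} + ⋯ + r_n`. -/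
def tailSum {n : ℕ} (r : Fin n → ℕ) (k : Fin n) : ℕ :=
  ∑ l ∈ Finset.univ.filter (fun l => k ≤ l), r l
/-- `N(x)` associated to a normal form in `F(2)` (Theorem 3):
the maximum of `i_k + r_k + ⋯ + r_n + 1` and `j_l + s_l + ⋯ + s_m + 1`. -/
def NFData.N2 (d : NFData 2) : ℕ :=
  max (Finset.univ.sup fun k => d.i k + tailSum d.r k + 1)
      (Finset.univ.sup fun l => d.j l + tailSum d.s l + 1)

/-- `N(x)` associated to a normal form in `F(p)` (Theorem 6):
the maximum of `⌊i_k/(p-1)⌋ + r_k + ⋯ + r_n + 1` and `⌊j_l/(p-1)⌋ + s_l + ⋯ + s_m + 1`. -/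
def NFData.Ngen {p : ℕ} (d : NFData p) : ℕ :=
  max (Finset.univ.sup fun k => d.i k / (p - 1) + tailSum d.r k + 1)
      (Finset.univ.sup fun l => d.j l / (p - 1) + tailSum d.s l + 1)

/-- `N(x) = max { i_k + r_k + ⋯ + r_n + 1 }` for a positive word (Proposition 2). -/
def posN {n : ℕ} (i r : Fin n → ℕ) : ℕ :=
  Finset.univ.sup fun k => i k + tailSum r k + 1

/-- `N₁(x) = max { ⌊i_k/(p-1)⌋ + r_k + ⋯ + r_n + 1 }` (Proposition 4). -/
def posN1 (p : ℕ) {n : ℕ} (i r : Fin n → ℕ) : ℕ :=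
  Finset.univ.sup fun k => i k / (p - 1) + tailSum r k + 1

/-- `N₂(x) = max { i_k + (p-1)(r_k + ⋯ + r_n) + 1 }` (Proposition 5). -/
def posN2 (p : ℕ) {n : ℕ} (i r : Fin n → ℕ) : ℕ :=
  Finset.univ.sup fun k => i k + (p - 1) * tailSum r k + 1

/-- `x ∈ ℤ[1/p]`. -/
def IsPAdicRational (p : ℕ) (x : ℝ) : Prop :=
  ∃ (a : ℤ) (n : ℕ), x = (a : ℝ) / (p : ℝ) ^ n

/-- Thompson's group `F(p)` realized as a set of permutations of `ℝ`: orientation-preserving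
piecewise-linear homeomorphisms of `[0,1]` (extended by the identity outside `[0,1]`) with
finitely many breakpoints, all in `ℤ[1/p]`, whose slopes are integer powers of `p`. -/
def PLSet (p : ℕ) : Set (Equiv.Perm ℝ) :=
  { f | Monotone f ∧ (∀ t : ℝ, t ≤ 0 → f t = t) ∧ (∀ t : ℝ, 1 ≤ t → f t = t) ∧
    ∃ B : Finset ℝ, (∀ b ∈ B, IsPAdicRational p b) ∧
      ∀ t : ℝ, t ∉ (B : Set ℝ) →
        ∃ ε > (0 : ℝ), ∃ (k : ℤ) (c : ℝ), ∀ s : ℝ, |s - t| < ε → f s = (p : ℝ) ^ k * s + c }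

/-- The map `Φ_p` on homeomorphisms: `(Φ_p f)(t) = t` for `t ≤ 1 - 1/p`, and
`(Φ_p f)(t) = ((p-1) + f(pt - (p-1)))/p` for `t ≥ 1 - 1/p`. -/
noncomputable def PhiMap (p : ℕ) (f : ℝ → ℝ) : ℝ → ℝ := fun t =>
  if t ≤ 1 - 1 / (p : ℝ) then t
  else (((p : ℝ) - 1) + f ((p : ℝ) * t - ((p : ℝ) - 1))) / (p : ℝ)

/-- The piecewise-linear homeomorphism `f_i` of `ℝ` corresponding to the generator `x_i`
of `F(p)`. -/
noncomputable def fgen (p : ℕ) (i : ℕ) : ℝ → ℝ := fun t =>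
  if t ≤ (i : ℝ) then t
  else if t ≤ (i : ℝ) + 1 then (p : ℝ) * t + (i : ℝ) * (1 - (p : ℝ))
  else t + (p : ℝ) - 1
/- ===================== Auxiliary development ===================== -/

namespace S19

variable {p : ℕ}

/-! ### Relations in `FP p` -/

theorem xg_mk_rel (hp : 2 ≤ p) {i j : ℕ} (h : i < j) :
    (xg p i)⁻¹ * xg p j * xg p i = xg p (j + p - 1) := by
  have hmem : ((FreeGroup.of i)⁻¹ * FreeGroup.of j * FreeGroup.of i *
      (FreeGroup.of (j + p - 1))⁻¹ : FreeGroup ℕ) ∈ thompsonRels p := ⟨i, j, h, rfl⟩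
  have h1 : (PresentedGroup.mk (thompsonRels p))
      ((FreeGroup.of i)⁻¹ * FreeGroup.of j * FreeGroup.of i *
        (FreeGroup.of (j + p - 1))⁻¹) = 1 := by
    have := Subgroup.subset_normalClosure (s := thompsonRels p) hmem
    exact (QuotientGroup.eq_one_iff _).2 this
  simp only [map_mul, map_inv] at h1
  have h2 : (xg p i)⁻¹ * xg p j * xg p i * (xg p (j + p - 1))⁻¹ = 1 := h1
  rwa [mul_inv_eq_one] at h2

/-- `x_c x_a = x_a x_{c+(p-1)}` for `a < c`. -/
theorem xg_comm (hp : 2 ≤ p) {a c : ℕ} (h : a < c) :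
    xg p c * xg p a = xg p a * xg p (c + (p - 1)) := by
  have := xg_mk_rel hp h
  have hq : c + p - 1 = c + (p - 1) := by omega
  rw [hq] at this
  calc xg p c * xg p a = xg p a * ((xg p a)⁻¹ * xg p c * xg p a) := by group
    _ = xg p a * xg p (c + (p - 1)) := by rw [this]

/-- `x_a⁻¹ x_c = x_{c+(p-1)} x_a⁻¹` for `a < c`. -/
theorem xg_inv_comm (hp : 2 ≤ p) {a c : ℕ} (h : a < c) :
    (xg p a)⁻¹ * xg p c = xg p (c + (p - 1)) * (xg p a)⁻¹ := by
  have := xg_mk_rel hp h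
  have hq : c + p - 1 = c + (p - 1) := by omega
  rw [hq] at this
  rw [← this]; group

/-- `x_t⁻¹ x_a = x_a x_{t+(p-1)}⁻¹` for `a < t`. -/
theorem xg_inv_comm' (hp : 2 ≤ p) {a t : ℕ} (h : a < t) :
    (xg p t)⁻¹ * xg p a = xg p a * (xg p (t + (p - 1)))⁻¹ := by
  have := xg_comm hp h
  calc (xg p t)⁻¹ * xg p a
      = (xg p t)⁻¹ * (xg p t * xg p a * (xg p (t + (p-1)))⁻¹) := by rw [this]; group
    _ = xg p a * (xg p (t + (p - 1)))⁻¹ := by group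

/-- `x_a x_c = x_{c - (p-1)} x_a` for `a + (p-1) < c`. -/
theorem xg_comm_down (hp : 2 ≤ p) {a c : ℕ} (h : a + (p - 1) < c) :
    xg p a * xg p c = xg p (c - (p - 1)) * xg p a := by
  have h' : a < c - (p - 1) := by omega
  have := xg_comm hp h'
  have hq : c - (p - 1) + (p - 1) = c := by omega
  rw [hq] at this
  rw [this]


/-! ### Words given by lists of generator indices -/

/-- Product `x_{a_1} ⋯ x_{a_k}` for a list of indices. -/
def px (p : ℕ) (L : List ℕ) : FP p := (L.map (xg p)).prod

@[simp] theorem px_nil : px p [] = 1 := rfl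

@[simp] theorem px_cons {a : ℕ} {L : List ℕ} : px p (a :: L) = xg p a * px p L := by
  simp [px]

@[simp] theorem px_append {L M : List ℕ} : px p (L ++ M) = px p L * px p M := by
  simp [px]

/-- The element `x_{a_1} ⋯ x_{a_k} (x_{b_1} ⋯ x_{b_l})⁻¹`. -/
def pword (p : ℕ) (P Q : List ℕ) : FP p := px p P * (px p Q)⁻¹

theorem px_comm (hp : 2 ≤ p) {t : ℕ} {L : List ℕ} (h : ∀ c ∈ L, t < c) :
    px p L * xg p t = xg p t * px p (L.map (· + (p - 1))) := by
  induction L with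
  | nil => simp
  | cons a L ih =>
      have ha : t < a := h a (by simp)
      have ih' := ih (fun c hc => h c (by simp [hc]))
      simp only [px_cons, List.map_cons]
      rw [mul_assoc, ih', ← mul_assoc, xg_comm hp ha, mul_assoc]

theorem xg_inv_px (hp : 2 ≤ p) {a : ℕ} {L : List ℕ} (h : ∀ c ∈ L, a < c) :
    (xg p a)⁻¹ * px p L = px p (L.map (· + (p - 1))) * (xg p a)⁻¹ := by
  induction L with
  | nil => simp
  | cons c L ih =>
      have hc : a < c := h c (by simp)
      have ih' := ih (fun b hb => h b (by simp [hb]))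
      simp only [px_cons, List.map_cons]
      rw [← mul_assoc, xg_inv_comm hp hc, mul_assoc, ih', ← mul_assoc]

theorem xg_px_down (hp : 2 ≤ p) {a : ℕ} {L : List ℕ} (h : ∀ c ∈ L, a + (p - 1) < c) :
    xg p a * px p L = px p (L.map (· - (p - 1))) * xg p a := by
  induction L with
  | nil => simp
  | cons c L ih =>
      have hc : a + (p - 1) < c := h c (by simp)
      have ih' := ih (fun b hb => h b (by simp [hb]))
      simp only [px_cons, List.map_cons]
      rw [← mul_assoc, xg_comm_down hp hc, mul_assoc, ih', ← mul_assoc]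

/-- Conjugation by `x_a` shifts all indices above `a` up by `p-1`. -/
theorem pword_conj (hp : 2 ≤ p) {a : ℕ} {P Q : List ℕ}
    (hP : ∀ c ∈ P, a < c) (hQ : ∀ c ∈ Q, a < c) :
    (xg p a)⁻¹ * pword p P Q * xg p a =
      pword p (P.map (· + (p - 1))) (Q.map (· + (p - 1))) := by
  unfold pword
  have h1 := xg_inv_px hp hP
  have h2 := xg_inv_px hp hQ
  have h2' : (px p Q)⁻¹ * xg p a = (xg p a) * (px p (Q.map (· + (p - 1))))⁻¹ := by
    have := congrArg Inv.inv h2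
    simpa [mul_inv_rev] using this
  calc (xg p a)⁻¹ * (px p P * (px p Q)⁻¹) * xg p a
      = ((xg p a)⁻¹ * px p P) * ((px p Q)⁻¹ * xg p a) := by group
    _ = (px p (P.map (· + (p - 1))) * (xg p a)⁻¹) *
          ((xg p a) * (px p (Q.map (· + (p - 1))))⁻¹) := by rw [h1, h2']
    _ = _ := by group

theorem pword_conj_pow (hp : 2 ≤ p) {a : ℕ} {P Q : List ℕ} (n : ℕ)
    (hP : ∀ c ∈ P, a < c) (hQ : ∀ c ∈ Q, a < c) :
    (xg p a)⁻¹ ^ n * pword p P Q * xg p a ^ n =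
      pword p (P.map (· + n * (p - 1))) (Q.map (· + n * (p - 1))) := by
  induction n with
  | zero => simp
  | succ n ih =>
      have step := pword_conj hp (a := a)
        (P := P.map (· + n * (p - 1))) (Q := Q.map (· + n * (p - 1)))
        (by intro c hc; obtain ⟨b, hb, rfl⟩ := List.mem_map.1 hc
            exact lt_of_lt_of_le (hP b hb) (Nat.le_add_right _ _))
        (by intro c hc; obtain ⟨b, hb, rfl⟩ := List.mem_map.1 hc
            exact lt_of_lt_of_le (hQ b hb) (Nat.le_add_right _ _))
      have : (xg p a)⁻¹ ^ (n+1) * pword p P Q * xg p a ^ (n+1)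
          = (xg p a)⁻¹ * ((xg p a)⁻¹ ^ n * pword p P Q * xg p a ^ n) * xg p a := by
        rw [pow_succ, pow_succ]; group
      rw [this, ih, step]
      simp only [List.map_map]
      congr 1 <;> · apply List.map_congr_left; intro b _; simp only [Function.comp_apply]; rw [Nat.succ_mul]; omega

/-! ### Sortedness and normality of list pairs -/

/-- The pair `(P, Q)` is reduced. -/
def Reduced (p : ℕ) (P Q : List ℕ) : Prop :=
  ∀ a, a ∈ P → a ∈ Q → ∃ b, a < b ∧ b ≤ a + (p - 1) ∧ (b ∈ P ∨ b ∈ Q)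

/-- The pair `(P, Q)` is a normal-form pair. -/
def Norm (p : ℕ) (P Q : List ℕ) : Prop :=
  P.Pairwise (· ≤ ·) ∧ Q.Pairwise (· ≤ ·) ∧ Reduced p P Q


/-! ### Insertion algorithms -/

theorem sorted_map_add {L : List ℕ} {q : ℕ} (h : L.Pairwise (· ≤ ·)) :
    (L.map (· + q)).Pairwise (· ≤ ·) :=
  List.Pairwise.map _ (fun a b hab => by omega) h

theorem sorted_map_sub {L : List ℕ} {q : ℕ} (h : L.Pairwise (· ≤ ·)) :
    (L.map (· - q)).Pairwise (· ≤ ·) :=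
  List.Pairwise.map _ (fun a b hab => by omega) h

/-- Insert a positive letter `x_t` at the left of a positive word. -/
def posIns (q t : ℕ) : List ℕ → List ℕ
  | [] => [t]
  | a :: P => if t ≤ a then t :: a :: P else a :: posIns q (t + q) P

theorem posIns_mem {q t : ℕ} {L : List ℕ} :
    ∀ x ∈ posIns q t L, t ≤ x ∨ x ∈ L := by
  induction L generalizing t with
  | nil => intro x hx; simp [posIns] at hx; simp [hx]
  | cons a P ih =>
      intro x hx
      simp only [posIns] at hx
      split_ifs at hx with h
      · rcases List.mem_cons.1 hx with rfl | h1
        · exact Or.inl le_rfl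
        · exact Or.inr h1
      · rcases List.mem_cons.1 hx with h1 | h1
        · simp [h1]
        · rcases ih x h1 with h2 | h2
          · exact Or.inl (by omega)
          · simp [h2]

theorem posIns_sorted {q t : ℕ} {L : List ℕ} (h : L.Pairwise (· ≤ ·)) :
    (posIns q t L).Pairwise (· ≤ ·) := by
  induction L generalizing t with
  | nil => simp [posIns]
  | cons a P ih =>
      rw [List.pairwise_cons] at h
      obtain ⟨ha, hP⟩ := h
      simp only [posIns]
      split_ifs with hta
      · refine List.pairwise_cons.2 ⟨?_, List.pairwise_cons.2 ⟨ha, hP⟩⟩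
        intro b hb
        rcases List.mem_cons.1 hb with rfl | hb
        · exact hta
        · exact le_trans hta (ha b hb)
      · refine List.pairwise_cons.2 ⟨?_, ih hP⟩
        intro b hb
        rcases posIns_mem b hb with h1 | h1
        · omega
        · exact ha b h1

theorem posIns_word (hp : 2 ≤ p) {t : ℕ} {L : List ℕ} :
    xg p t * px p L = px p (posIns (p - 1) t L) := by
  induction L generalizing t with
  | nil => simp [posIns]
  | cons a P ih =>
      simp only [posIns]
      split_ifs with hta
      · simp
      · push_neg at hta
        simp only [px_cons, ← mul_assoc]
        rw [xg_comm hp hta, mul_assoc, ih]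

/-- Insert a positive letter `x_t` at the right of a positive word. -/
def negQins (q t : ℕ) : List ℕ → List ℕ
  | [] => [t]
  | a :: Q => if a ≤ t then a :: negQins q t Q else t :: (a :: Q).map (· + q)

theorem negQins_mem {q t : ℕ} {L : List ℕ} :
    ∀ x ∈ negQins q t L, t ≤ x ∨ ∃ c ∈ L, c ≤ x := by
  induction L with
  | nil => intro x hx; simp [negQins] at hx; simp [hx]
  | cons a Q ih =>
      intro x hx
      simp only [negQins] at hx
      split_ifs at hx with h
      · rcases List.mem_cons.1 hx with rfl | h1
        · exact Or.inr ⟨x, by simp, le_refl x⟩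
        · rcases ih x h1 with h2 | ⟨c, hc, hcx⟩
          · simp [h2]
          · exact Or.inr ⟨c, by simp [hc], hcx⟩
      · rcases List.mem_cons.1 hx with rfl | h1
        · simp
        · obtain ⟨b, hb, rfl⟩ := List.mem_map.1 h1
          exact Or.inr ⟨b, hb, by omega⟩

theorem negQins_sorted {q t : ℕ} {L : List ℕ} (h : L.Pairwise (· ≤ ·)) :
    (negQins q t L).Pairwise (· ≤ ·) := by
  induction L with
  | nil => simp [negQins]
  | cons a Q ih =>
      rw [List.pairwise_cons] at h
      obtain ⟨ha, hQ⟩ := h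
      simp only [negQins]
      split_ifs with hat
      · refine List.pairwise_cons.2 ⟨?_, ih hQ⟩
        intro b hb
        rcases negQins_mem b hb with h1 | ⟨c, hc, hcb⟩
        · omega
        · exact le_trans (ha c hc) hcb
      · refine List.pairwise_cons.2 ⟨?_, ?_⟩
        · intro b hb
          simp only [List.map_cons] at hb
          rcases List.mem_cons.1 hb with rfl | hb
          · omega
          · obtain ⟨c, hc, hce⟩ := List.mem_map.1 hb
            replace hce : c + q = b := hce
            have := ha c hc
            omega
        · exact sorted_map_add (List.pairwise_cons.2 ⟨ha, hQ⟩)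

theorem negQins_word (hp : 2 ≤ p) {t : ℕ} {L : List ℕ} (h : L.Pairwise (· ≤ ·)) :
    px p L * xg p t = px p (negQins (p - 1) t L) := by
  induction L with
  | nil => simp [negQins]
  | cons a Q ih =>
      rw [List.pairwise_cons] at h
      obtain ⟨ha, hQ⟩ := h
      simp only [negQins]
      split_ifs with hat
      · rw [px_cons, px_cons, mul_assoc, ih hQ]
      · push_neg at hat
        have : ∀ c ∈ a :: Q, t < c := by
          intro c hc
          rcases List.mem_cons.1 hc with rfl | hc
          · exact hat
          · exact lt_of_lt_of_le hat (ha c hc)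
        rw [px_comm hp this, px_cons]

/-- Move a negative letter `x_t⁻¹` from the left through a positive word: returns the
new positive word and the residual negative letter, if it did not cancel. -/
def negStep (q t : ℕ) : List ℕ → List ℕ × Option ℕ
  | [] => ([], some t)
  | a :: P =>
    if a < t then
      ((a :: (negStep q (t + q) P).1), (negStep q (t + q) P).2)
    else if a = t then (P, none)
    else ((a :: P).map (· + q), some t)

/-- The residual letter as a group element. -/
def resid (p : ℕ) : Option ℕ → FP p
  | none => 1
  | some t => (xg p t)⁻¹

theorem negStep_mem {q t : ℕ} {L : List ℕ} :
    ∀ x ∈ (negStep q t L).1, ∃ c ∈ L, c ≤ x := by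
  induction L generalizing t with
  | nil => intro x hx; simp [negStep] at hx
  | cons a P ih =>
      intro x hx
      simp only [negStep] at hx
      split_ifs at hx with h1 h2
      · rcases List.mem_cons.1 hx with rfl | hx
        · exact ⟨x, by simp, le_refl x⟩
        · obtain ⟨c, hc, hcx⟩ := ih x hx
          exact ⟨c, by simp [hc], hcx⟩
      · exact ⟨x, by simp [hx], le_refl x⟩
      · obtain ⟨b, hb, rfl⟩ := List.mem_map.1 hx
        exact ⟨b, hb, by omega⟩

theorem negStep_sorted {q t : ℕ} {L : List ℕ} (h : L.Pairwise (· ≤ ·)) :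
    ((negStep q t L).1).Pairwise (· ≤ ·) := by
  induction L generalizing t with
  | nil => simp [negStep]
  | cons a P ih =>
      rw [List.pairwise_cons] at h
      obtain ⟨ha, hP⟩ := h
      simp only [negStep]
      split_ifs with h1 h2
      · refine List.pairwise_cons.2 ⟨?_, ih hP⟩
        intro b hb
        obtain ⟨c, hc, hcb⟩ := negStep_mem b hb
        exact le_trans (ha c hc) hcb
      · exact hP
      · exact sorted_map_add (List.pairwise_cons.2 ⟨ha, hP⟩)

theorem negStep_word (hp : 2 ≤ p) {t : ℕ} {L : List ℕ} (h : L.Pairwise (· ≤ ·)) :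
    (xg p t)⁻¹ * px p L =
      px p (negStep (p - 1) t L).1 * resid p (negStep (p - 1) t L).2 := by
  induction L generalizing t with
  | nil => simp [negStep, resid]
  | cons a P ih =>
      rw [List.pairwise_cons] at h
      obtain ⟨ha, hP⟩ := h
      simp only [negStep]
      split_ifs with h1 h2
      · rw [px_cons, ← mul_assoc, xg_inv_comm' hp h1, mul_assoc, ih hP, px_cons,
          mul_assoc]
      · subst h2
        rw [px_cons, ← mul_assoc, inv_mul_cancel, one_mul, resid, mul_one]
      · push_neg at h1
        have hlt : ∀ c ∈ a :: P, t < c := by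
          intro c hc
          rcases List.mem_cons.1 hc with rfl | hc
          · omega
          · have := ha c hc; omega
        exact xg_inv_px hp hlt


/-! ### Normalization: existence of reduced forms -/

theorem sorted_last_decomp {L : List ℕ} (hs : L.Pairwise (· ≤ ·)) {a : ℕ} (ha : a ∈ L) :
    ∃ L1 L2, L = L1 ++ a :: L2 ∧ (∀ x ∈ L1, x ≤ a) ∧ (∀ x ∈ L2, a < x) := by
  induction L with
  | nil => simp at ha
  | cons c T ih =>
      rw [List.pairwise_cons] at hs
      obtain ⟨hc, hT⟩ := hs
      by_cases haT : a ∈ T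
      · obtain ⟨T1, T2, hTe, h1, h2⟩ := ih hT haT
        exact ⟨c :: T1, T2, by simp [hTe], by
          intro x hx
          rcases List.mem_cons.1 hx with rfl | hx
          · exact hc a haT
          · exact h1 x hx, h2⟩
      · have hac : a = c := by
          rcases List.mem_cons.1 ha with h | h
          · exact h
          · exact absurd h haT
        subst hac
        refine ⟨[], T, by simp, by simp, ?_⟩
        intro x hx
        have := hc x hx
        rcases lt_or_eq_of_le this with h | h
        · exact h
        · exact absurd (h ▸ hx) haT

theorem reduce_exists (hp : 2 ≤ p) :
    ∀ n (P Q : List ℕ), P.length + Q.length ≤ n →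
      P.Pairwise (· ≤ ·) → Q.Pairwise (· ≤ ·) →
      ∃ P' Q', Norm p P' Q' ∧ pword p P' Q' = pword p P Q := by
  intro n
  induction n using Nat.strong_induction_on with
  | _ n ih =>
    intro P Q hlen hsP hsQ
    by_cases hred : Reduced p P Q
    · exact ⟨P, Q, ⟨hsP, hsQ, hred⟩, rfl⟩
    · unfold Reduced at hred
      push_neg at hred
      obtain ⟨a, haP, haQ, hw⟩ := hred
      obtain ⟨P1, P2, hPe, hP1, hP2⟩ := sorted_last_decomp hsP haP
      obtain ⟨Q1, Q2, hQe, hQ1, hQ2⟩ := sorted_last_decomp hsQ haQ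
      have hP2' : ∀ x ∈ P2, a + (p - 1) < x := by
        intro x hx
        have h1 := hP2 x hx
        by_contra h2
        exact ((hw x h1 (by omega)).1) (by rw [hPe]; simp [hx])
      have hQ2' : ∀ x ∈ Q2, a + (p - 1) < x := by
        intro x hx
        have h1 := hQ2 x hx
        by_contra h2
        exact ((hw x h1 (by omega)).2) (by rw [hQe]; simp [hx])
      set Pn := P1 ++ P2.map (· - (p - 1)) with hPn
      set Qn := Q1 ++ Q2.map (· - (p - 1)) with hQn
      have hsplit : ∀ (L1 L2 : List ℕ), (∀ x ∈ L1, x ≤ a) → (∀ x ∈ L2, a + (p-1) < x) →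
          L1.Pairwise (· ≤ ·) → L2.Pairwise (· ≤ ·) →
          (L1 ++ L2.map (· - (p - 1))).Pairwise (· ≤ ·) := by
        intro L1 L2 h1 h2 hs1 hs2
        refine List.pairwise_append.mpr ⟨hs1, sorted_map_sub hs2, ?_⟩
        intro x hx y hy
        obtain ⟨c, hc, hce⟩ := List.mem_map.1 hy
        replace hce : c - (p - 1) = y := hce
        have := h2 c hc
        have := h1 x hx
        omega
      have hsPdec : P1.Pairwise (· ≤ ·) ∧ (a :: P2).Pairwise (· ≤ ·) := by
        have h := List.pairwise_append.mp (show List.Pairwise (· ≤ ·) (P1 ++ a :: P2) from hPe ▸ hsP)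
        exact ⟨h.1, h.2.1⟩
      have hsQdec : Q1.Pairwise (· ≤ ·) ∧ (a :: Q2).Pairwise (· ≤ ·) := by
        have h := List.pairwise_append.mp (show List.Pairwise (· ≤ ·) (Q1 ++ a :: Q2) from hQe ▸ hsQ)
        exact ⟨h.1, h.2.1⟩
      have hsPn : Pn.Pairwise (· ≤ ·) :=
        hsplit _ _ hP1 hP2' hsPdec.1 (List.pairwise_cons.1 hsPdec.2).2
      have hsQn : Qn.Pairwise (· ≤ ·) :=
        hsplit _ _ hQ1 hQ2' hsQdec.1 (List.pairwise_cons.1 hsQdec.2).2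
      have hpxP : px p P = px p Pn * xg p a := by
        have h := xg_px_down hp hP2'
        rw [hPe, hPn]
        simp only [px_append, px_cons]
        rw [h, mul_assoc]
      have hpxQ : px p Q = px p Qn * xg p a := by
        have h := xg_px_down hp hQ2'
        rw [hQe, hQn]
        simp only [px_append, px_cons]
        rw [h, mul_assoc]
      have hword : pword p Pn Qn = pword p P Q := by
        unfold pword
        rw [hpxP, hpxQ]
        group
      have hlen' : Pn.length + Qn.length ≤ n - 1 := by
        have h1 : P.length = P1.length + 1 + P2.length := by rw [hPe]; simp; omega
        have h2 : Q.length = Q1.length + 1 + Q2.length := by rw [hQe]; simp; omega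
        have h3 : Pn.length = P1.length + P2.length := by rw [hPn]; simp
        have h4 : Qn.length = Q1.length + Q2.length := by rw [hQn]; simp
        omega
      have hn1 : n - 1 < n := by
        have : 1 ≤ P.length := by
          rw [hPe]; simp; omega
        omega
      obtain ⟨P', Q', hnorm, hw'⟩ := ih (n - 1) hn1 Pn Qn hlen' hsPn hsQn
      exact ⟨P', Q', hnorm, by rw [hw', hword]⟩

/-- Multiplying a sorted pair by a positive generator. -/
theorem step_pos (hp : 2 ≤ p) {P Q : List ℕ} (hsP : P.Pairwise (· ≤ ·))
    (hsQ : Q.Pairwise (· ≤ ·)) (t : ℕ) :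
    ∃ P' Q', Norm p P' Q' ∧ pword p P' Q' = xg p t * pword p P Q := by
  have hw : xg p t * pword p P Q = pword p (posIns (p - 1) t P) Q := by
    unfold pword
    rw [← mul_assoc, posIns_word hp]
  obtain ⟨P', Q', hn, he⟩ := reduce_exists hp
    ((posIns (p-1) t P).length + Q.length) (posIns (p-1) t P) Q le_rfl
    (posIns_sorted hsP) hsQ
  exact ⟨P', Q', hn, by rw [he, hw]⟩

/-- Multiplying a sorted pair by the inverse of a generator. -/
theorem step_neg (hp : 2 ≤ p) {P Q : List ℕ} (hsP : P.Pairwise (· ≤ ·))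
    (hsQ : Q.Pairwise (· ≤ ·)) (t : ℕ) :
    ∃ P' Q', Norm p P' Q' ∧ pword p P' Q' = (xg p t)⁻¹ * pword p P Q := by
  have hw := negStep_word hp (p := p) (t := t) hsP
  rcases ho : (negStep (p - 1) t P).2 with _ | t'
  · have hw2 : (xg p t)⁻¹ * pword p P Q = pword p (negStep (p-1) t P).1 Q := by
      unfold pword
      rw [← mul_assoc, hw, ho, resid, mul_one]
    obtain ⟨P', Q', hn, he⟩ := reduce_exists hp _ (negStep (p-1) t P).1 Q le_rfl
      (negStep_sorted hsP) hsQ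
    exact ⟨P', Q', hn, by rw [he, hw2]⟩
  · have hw2 : (xg p t)⁻¹ * pword p P Q =
        pword p (negStep (p-1) t P).1 (negQins (p - 1) t' Q) := by
      unfold pword
      rw [← mul_assoc, hw, ho, resid, ← negQins_word hp hsQ]
      group
    obtain ⟨P', Q', hn, he⟩ := reduce_exists hp _ (negStep (p-1) t P).1
      (negQins (p - 1) t' Q) le_rfl (negStep_sorted hsP) (negQins_sorted hsQ)
    exact ⟨P', Q', hn, by rw [he, hw2]⟩

theorem exists_letters (x : FP p) :
    ∃ L : List (ℕ × Bool),
      x = (L.map (fun ib => if ib.2 then xg p ib.1 else (xg p ib.1)⁻¹)).prod := by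
  induction x using PresentedGroup.induction_on with
  | H z =>
    induction z using FreeGroup.induction_on with
    | C1 => exact ⟨[], by simp; rfl⟩
    | of i => exact ⟨[(i, true)], by simp [xg]; rfl⟩
    | inv_of i _ => exact ⟨[(i, false)], by simp [xg]; rfl⟩
    | mul y z hy hz =>
        obtain ⟨L1, h1⟩ := hy
        obtain ⟨L2, h2⟩ := hz
        exact ⟨L1 ++ L2, by simp [map_mul, h1, h2]; rfl⟩

theorem exists_norm (hp : 2 ≤ p) (x : FP p) :
    ∃ P Q, Norm p P Q ∧ pword p P Q = x := by
  obtain ⟨L, hL⟩ := exists_letters x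
  subst hL
  induction L with
  | nil =>
      refine ⟨[], [], ⟨by simp, by simp, ?_⟩, by simp [pword, px]⟩
      intro a h; simp at h
  | cons ib L ihL =>
      obtain ⟨P, Q, hn, he⟩ := ihL
      rcases ib with ⟨i, b⟩
      cases b
      · obtain ⟨P', Q', hn', he'⟩ := step_neg hp hn.1 hn.2.1 i
        exact ⟨P', Q', hn', by rw [he', he]; simp⟩
      · obtain ⟨P', Q', hn', he'⟩ := step_pos hp hn.1 hn.2.1 i
        exact ⟨P', Q', hn', by rw [he', he]; simp⟩


/-! ### The piecewise-linear representation -/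

/-- Inverse of `fgen p i`. -/
noncomputable def fginv (p : ℕ) (i : ℕ) : ℝ → ℝ := fun t =>
  if t ≤ (i : ℝ) then t
  else if t ≤ (i : ℝ) + (p : ℝ) then (i : ℝ) + (t - (i : ℝ)) / (p : ℝ)
  else t - ((p : ℝ) - 1)

theorem fgen_left_inv (hp : 2 ≤ p) (i : ℕ) (t : ℝ) : fginv p i (fgen p i t) = t := by
  have hp2 : (2 : ℝ) ≤ (p : ℝ) := by exact_mod_cast hp
  by_cases h1 : t ≤ (i : ℝ)
  · simp only [fgen, fginv, if_pos h1]
  · push_neg at h1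
    by_cases h2 : t ≤ (i : ℝ) + 1
    · have hv : fgen p i t = (p : ℝ) * t + (i : ℝ) * (1 - (p : ℝ)) := by
        simp only [fgen, if_neg (not_le.2 h1), if_pos h2]
      rw [hv]
      have hv1 : ¬ ((p : ℝ) * t + (i : ℝ) * (1 - (p : ℝ)) ≤ (i : ℝ)) := by
        push_neg; nlinarith
      have hv2 : (p : ℝ) * t + (i : ℝ) * (1 - (p : ℝ)) ≤ (i : ℝ) + (p : ℝ) := by
        nlinarith
      simp only [fginv, if_neg hv1, if_pos hv2]
      field_simp
      ring
    · push_neg at h2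
      have hv : fgen p i t = t + (p : ℝ) - 1 := by
        simp only [fgen, if_neg (not_le.2 h1), if_neg (not_le.2 h2)]
      rw [hv]
      have hv1 : ¬ (t + (p : ℝ) - 1 ≤ (i : ℝ)) := by push_neg; nlinarith
      have hv2 : ¬ (t + (p : ℝ) - 1 ≤ (i : ℝ) + (p : ℝ)) := by push_neg; nlinarith
      simp only [fginv, if_neg hv1, if_neg hv2]
      ring

theorem fgen_right_inv (hp : 2 ≤ p) (i : ℕ) (t : ℝ) : fgen p i (fginv p i t) = t := by
  have hp2 : (2 : ℝ) ≤ (p : ℝ) := by exact_mod_cast hp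
  by_cases h1 : t ≤ (i : ℝ)
  · simp only [fgen, fginv, if_pos h1]
  · push_neg at h1
    by_cases h2 : t ≤ (i : ℝ) + (p : ℝ)
    · have hv : fginv p i t = (i : ℝ) + (t - (i : ℝ)) / (p : ℝ) := by
        simp only [fginv, if_neg (not_le.2 h1), if_pos h2]
      rw [hv]
      have hd1 : 0 < (t - (i : ℝ)) / (p : ℝ) := by
        apply div_pos <;> linarith
      have hd2 : (t - (i : ℝ)) / (p : ℝ) ≤ 1 := by
        rw [div_le_one (by linarith)]; linarith
      have hv1 : ¬ ((i : ℝ) + (t - (i : ℝ)) / (p : ℝ) ≤ (i : ℝ)) := by push_neg; linarith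
      have hv2 : (i : ℝ) + (t - (i : ℝ)) / (p : ℝ) ≤ (i : ℝ) + 1 := by linarith
      simp only [fgen, if_neg hv1, if_pos hv2]
      field_simp
      ring
    · push_neg at h2
      have hv : fginv p i t = t - ((p : ℝ) - 1) := by
        simp only [fginv, if_neg (not_le.2 h1), if_neg (not_le.2 h2)]
      rw [hv]
      have hv1 : ¬ (t - ((p : ℝ) - 1) ≤ (i : ℝ)) := by push_neg; nlinarith
      have hv2 : ¬ (t - ((p : ℝ) - 1) ≤ (i : ℝ) + 1) := by push_neg; nlinarith
      simp only [fgen, if_neg hv1, if_neg hv2]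
      ring

/-- The permutation of `ℝ` given by `fgen p i`. -/
noncomputable def fgE (hp : 2 ≤ p) (i : ℕ) : Equiv.Perm ℝ where
  toFun := fgen p i
  invFun := fginv p i
  left_inv := fgen_left_inv hp i
  right_inv := fgen_right_inv hp i

@[simp] theorem fgE_apply (hp : 2 ≤ p) (i : ℕ) (t : ℝ) : fgE hp i t = fgen p i t := rfl

@[simp] theorem fgE_inv_apply (hp : 2 ≤ p) (i : ℕ) (t : ℝ) :
    (fgE hp i)⁻¹ t = fginv p i t := rfl

/-- The fundamental commutation identity at the level of PL maps. -/
theorem fgen_comp (hp : 2 ≤ p) {i j : ℕ} (hij : i < j) (t : ℝ) :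
    fgen p i (fgen p j t) = fgen p (j + p - 1) (fgen p i t) := by
  have hp2 : (2 : ℝ) ≤ (p : ℝ) := by exact_mod_cast hp
  have hij' : (i : ℝ) + 1 ≤ (j : ℝ) := by exact_mod_cast hij
  have hJ : ((j + p - 1 : ℕ) : ℝ) = (j : ℝ) + (p : ℝ) - 1 := by
    have h : (j + p - 1 : ℕ) = j + (p - 1) := by omega
    rw [h]
    push_cast [Nat.cast_sub (by omega : 1 ≤ p)]
    ring
  rcases le_or_gt t (i : ℝ) with c1 | c1
  · have e1 : fgen p j t = t := by
      simp only [fgen]; rw [if_pos (by linarith : t ≤ (j : ℝ))]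
    have e2 : fgen p i t = t := by simp only [fgen]; rw [if_pos c1]
    have e3 : fgen p (j + p - 1) t = t := by
      simp only [fgen]; rw [hJ, if_pos (by linarith : t ≤ (j : ℝ) + (p : ℝ) - 1)]
    rw [e1, e2, e3]
  · rcases le_or_gt t ((i : ℝ) + 1) with c2 | c2
    · have e1 : fgen p j t = t := by
        simp only [fgen]; rw [if_pos (by linarith : t ≤ (j : ℝ))]
      have e2 : fgen p i t = (p : ℝ) * t + (i : ℝ) * (1 - (p : ℝ)) := by
        simp only [fgen]; rw [if_neg (not_le.2 c1), if_pos c2]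
      have e3 : fgen p (j + p - 1) (fgen p i t) = fgen p i t := by
        rw [e2]; simp only [fgen]
        rw [hJ, if_pos (by nlinarith : (p : ℝ) * t + (i : ℝ) * (1 - (p : ℝ)) ≤ (j : ℝ) + (p : ℝ) - 1)]
      rw [e1, e3]
    · rcases le_or_gt t (j : ℝ) with c3 | c3
      · have e1 : fgen p j t = t := by
          simp only [fgen]; rw [if_pos c3]
        have e2 : fgen p i t = t + (p : ℝ) - 1 := by
          simp only [fgen]; rw [if_neg (not_le.2 c1), if_neg (not_le.2 c2)]
        have e3 : fgen p (j + p - 1) (fgen p i t) = fgen p i t := by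
          rw [e2]; simp only [fgen]
          rw [hJ, if_pos (by linarith : t + (p : ℝ) - 1 ≤ (j : ℝ) + (p : ℝ) - 1)]
        rw [e1, e3]
      · rcases le_or_gt t ((j : ℝ) + 1) with c4 | c4
        · have e1 : fgen p j t = (p : ℝ) * t + (j : ℝ) * (1 - (p : ℝ)) := by
            simp only [fgen]; rw [if_neg (not_le.2 c3), if_pos c4]
          have e2 : fgen p i ((p : ℝ) * t + (j : ℝ) * (1 - (p : ℝ)))
              = (p : ℝ) * t + (j : ℝ) * (1 - (p : ℝ)) + (p : ℝ) - 1 := by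
            simp only [fgen]
            rw [if_neg (by push_neg; nlinarith : ¬ ((p : ℝ) * t + (j : ℝ) * (1 - (p : ℝ)) ≤ (i : ℝ))),
              if_neg (by push_neg; nlinarith : ¬ ((p : ℝ) * t + (j : ℝ) * (1 - (p : ℝ)) ≤ (i : ℝ) + 1))]
          have e4 : fgen p i t = t + (p : ℝ) - 1 := by
            simp only [fgen]; rw [if_neg (not_le.2 c1), if_neg (not_le.2 c2)]
          have e5 : fgen p (j + p - 1) (t + (p : ℝ) - 1)
              = (p : ℝ) * (t + (p : ℝ) - 1) + ((j : ℝ) + (p : ℝ) - 1) * (1 - (p : ℝ)) := by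
            simp only [fgen]
            rw [hJ, if_neg (by push_neg; linarith : ¬ (t + (p : ℝ) - 1 ≤ (j : ℝ) + (p : ℝ) - 1)),
              if_pos (by linarith : t + (p : ℝ) - 1 ≤ (j : ℝ) + (p : ℝ) - 1 + 1)]
          rw [e1, e2, e4, e5]; ring
        · have e1 : fgen p j t = t + (p : ℝ) - 1 := by
            simp only [fgen]; rw [if_neg (not_le.2 c3), if_neg (by push_neg; linarith : ¬ (t ≤ (j:ℝ) + 1))]
          have e2 : fgen p i (t + (p : ℝ) - 1) = t + (p : ℝ) - 1 + (p : ℝ) - 1 := by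
            simp only [fgen]
            rw [if_neg (by push_neg; linarith : ¬ (t + (p : ℝ) - 1 ≤ (i : ℝ))),
              if_neg (by push_neg; linarith : ¬ (t + (p : ℝ) - 1 ≤ (i : ℝ) + 1))]
          have e4 : fgen p i t = t + (p : ℝ) - 1 := by
            simp only [fgen]; rw [if_neg (not_le.2 c1), if_neg (not_le.2 c2)]
          have e5 : fgen p (j + p - 1) (t + (p : ℝ) - 1) = t + (p : ℝ) - 1 + (p : ℝ) - 1 := by
            simp only [fgen]
            rw [hJ, if_neg (by push_neg; linarith : ¬ (t + (p : ℝ) - 1 ≤ (j : ℝ) + (p : ℝ) - 1)),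
              if_neg (by push_neg; linarith : ¬ (t + (p : ℝ) - 1 ≤ (j : ℝ) + (p : ℝ) - 1 + 1))]
          rw [e1, e2, e4, e5]


theorem fginv_fix {i : ℕ} {t : ℝ} (h : t ≤ (i : ℝ)) : fginv p i t = t := by
  simp only [fginv, if_pos h]

theorem fginv_mid (hp : 2 ≤ p) {i : ℕ} {t : ℝ} (h1 : (i : ℝ) < t)
    (h2 : t ≤ (i : ℝ) + (p : ℝ)) : fginv p i t = (i : ℝ) + (t - (i : ℝ)) / (p : ℝ) := by
  simp only [fginv, if_neg (not_le.2 h1), if_pos h2]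

/-- The representation of `FP p` by permutations of `ℝ`. -/
noncomputable def rho (hp : 2 ≤ p) : FP p →* Equiv.Perm ℝ :=
  PresentedGroup.toGroup (f := fun i => (fgE hp i)⁻¹) (by
    rintro r ⟨i, j, hij, rfl⟩
    simp only [map_mul, map_inv, FreeGroup.lift_apply_of, inv_inv]
    have hc : fgE hp i * fgE hp j = fgE hp (j + p - 1) * fgE hp i := by
      apply Equiv.ext
      intro t
      simp only [Equiv.Perm.mul_apply, fgE_apply]
      exact fgen_comp hp hij t
    have h2 : (fgE hp j)⁻¹ * (fgE hp i)⁻¹ = (fgE hp i)⁻¹ * (fgE hp (j + p - 1))⁻¹ := by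
      rw [← mul_inv_rev, ← mul_inv_rev, hc]
    calc fgE hp i * (fgE hp j)⁻¹ * (fgE hp i)⁻¹ * fgE hp (j + p - 1)
        = fgE hp i * ((fgE hp j)⁻¹ * (fgE hp i)⁻¹) * fgE hp (j + p - 1) := by group
      _ = fgE hp i * ((fgE hp i)⁻¹ * (fgE hp (j + p - 1))⁻¹) * fgE hp (j + p - 1) := by
          rw [h2]
      _ = 1 := by group)

theorem rho_xg (hp : 2 ≤ p) (i : ℕ) : rho hp (xg p i) = (fgE hp i)⁻¹ :=
  PresentedGroup.toGroup.of _

theorem rho_xg_apply (hp : 2 ≤ p) (i : ℕ) (t : ℝ) : rho hp (xg p i) t = fginv p i t := by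
  rw [rho_xg]; rfl

theorem rho_px_fix (hp : 2 ≤ p) {B : ℕ} {L : List ℕ} (h : ∀ c ∈ L, B ≤ c) {t : ℝ}
    (ht : t ≤ (B : ℝ)) : rho hp (px p L) t = t := by
  induction L with
  | nil => simp [px]
  | cons a T ih =>
      rw [px_cons, map_mul, Equiv.Perm.mul_apply, ih (fun c hc => h c (by simp [hc])),
        rho_xg_apply, fginv_fix]
      have h1 : B ≤ a := h a (by simp)
      have : (B : ℝ) ≤ (a : ℝ) := by exact_mod_cast h1
      linarith

theorem rho_px_fix_inv (hp : 2 ≤ p) {B : ℕ} {L : List ℕ} (h : ∀ c ∈ L, B ≤ c) {t : ℝ}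
    (ht : t ≤ (B : ℝ)) : (rho hp (px p L))⁻¹ t = t := by
  conv_lhs => rw [← rho_px_fix hp h ht]
  exact Equiv.symm_apply_apply _ _

theorem rho_px_germ (hp : 2 ≤ p) {A : ℕ} {L : List ℕ} (hs : L.Pairwise (· ≤ ·))
    (h : ∀ c ∈ L, A ≤ c) :
    ∃ ε : ℝ, 0 < ε ∧ ∀ t : ℝ, (A : ℝ) < t → t < (A : ℝ) + ε →
      rho hp (px p L) t = (A : ℝ) + (t - (A : ℝ)) / (p : ℝ) ^ (L.count A) := by
  have hp2 : (2 : ℝ) ≤ (p : ℝ) := by exact_mod_cast hp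
  induction L with
  | nil =>
      exact ⟨1, one_pos, fun t _ _ => by simp [px]⟩
  | cons a T ih =>
      rw [List.pairwise_cons] at hs
      obtain ⟨haT, hT⟩ := hs
      rcases eq_or_lt_of_le (h a (by simp)) with rfl | hAa
      · obtain ⟨ε, hε, hG⟩ := ih hT (fun c hc => h c (by simp [hc]))
        refine ⟨min ε 1, by positivity, fun t ht1 ht2 => ?_⟩
        have hm1 : min ε 1 ≤ ε := min_le_left _ _
        have hm2 : min ε 1 ≤ 1 := min_le_right _ _
        have htε : t < (A : ℝ) + ε := by linarith
        have ht1' : t < (A : ℝ) + 1 := by linarith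
        rw [px_cons, map_mul, Equiv.Perm.mul_apply, hG t ht1 htε, rho_xg_apply]
        have hpowpos : (0 : ℝ) < (p : ℝ) ^ (T.count A) := by positivity
        have hpow1 : (1 : ℝ) ≤ (p : ℝ) ^ (T.count A) := one_le_pow₀ (by linarith)
        have hd1 : 0 < (t - (A : ℝ)) / (p : ℝ) ^ (T.count A) := by
          apply div_pos <;> linarith
        have hd2 : (t - (A : ℝ)) / (p : ℝ) ^ (T.count A) ≤ (p : ℝ) := by
          have h1 : (t - (A : ℝ)) / (p : ℝ) ^ (T.count A) ≤ t - (A : ℝ) := by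
            rw [div_le_iff₀ hpowpos]; nlinarith
          linarith
        rw [fginv_mid hp (by linarith) (by linarith)]
        have hc : (A :: T).count A = T.count A + 1 := by simp [List.count_cons]
        rw [hc, pow_succ]
        field_simp
        ring
      · refine ⟨(a : ℝ) - (A : ℝ), by
          have : (A : ℝ) < (a : ℝ) := by exact_mod_cast hAa
          linarith, fun t ht1 ht2 => ?_⟩
        have hta : t ≤ (a : ℝ) := by linarith
        have hcnt : (a :: T).count A = 0 := by
          rw [List.count_eq_zero]
          intro hmem
          rcases List.mem_cons.1 hmem with h' | h'
          · omega
          · have := haT A h'; omega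
        rw [px_cons, map_mul, Equiv.Perm.mul_apply,
          rho_px_fix hp (B := a) (fun c hc => haT c hc) hta, rho_xg_apply, fginv_fix hta,
          hcnt, pow_zero]
        ring

theorem rho_px_germ_inv (hp : 2 ≤ p) {A : ℕ} {L : List ℕ} (hs : L.Pairwise (· ≤ ·))
    (h : ∀ c ∈ L, A ≤ c) :
    ∃ ε : ℝ, 0 < ε ∧ ∀ t : ℝ, (A : ℝ) < t → t < (A : ℝ) + ε →
      (rho hp (px p L))⁻¹ t = (A : ℝ) + (t - (A : ℝ)) * (p : ℝ) ^ (L.count A) := by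
  have hp2 : (2 : ℝ) ≤ (p : ℝ) := by exact_mod_cast hp
  obtain ⟨ε, hε, hG⟩ := rho_px_germ hp hs h
  have hpowpos : (0 : ℝ) < (p : ℝ) ^ (L.count A) := by positivity
  refine ⟨ε / (p : ℝ) ^ (L.count A), by positivity, fun t ht1 ht2 => ?_⟩
  set s : ℝ := (A : ℝ) + (t - (A : ℝ)) * (p : ℝ) ^ (L.count A) with hsdef
  have hs1 : (A : ℝ) < s := by
    have : 0 < (t - (A : ℝ)) * (p : ℝ) ^ (L.count A) := by
      apply mul_pos <;> linarith
    linarith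
  have hs2 : s < (A : ℝ) + ε := by
    have h3 : (t - (A : ℝ)) * (p : ℝ) ^ (L.count A) < (ε / (p : ℝ) ^ (L.count A)) * (p : ℝ) ^ (L.count A) :=
      mul_lt_mul_of_pos_right (by linarith) hpowpos
    have h4 : (ε / (p : ℝ) ^ (L.count A)) * (p : ℝ) ^ (L.count A) = ε :=
      div_mul_cancel₀ _ (ne_of_gt hpowpos)
    rw [h4] at h3
    simp only [hsdef]
    linarith
  have happ : rho hp (px p L) s = t := by
    rw [hG s hs1 hs2, hsdef]
    field_simp
    ring
  rw [← happ]; exact Equiv.symm_apply_apply _ _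


theorem rho_word_germ (hp : 2 ≤ p) {A : ℕ} {P Q : List ℕ}
    (hsP : P.Pairwise (· ≤ ·)) (hsQ : Q.Pairwise (· ≤ ·))
    (hP : ∀ c ∈ P, A ≤ c) (hQ : ∀ c ∈ Q, A ≤ c) :
    ∃ ε : ℝ, 0 < ε ∧ ∀ t : ℝ, (A : ℝ) < t → t < (A : ℝ) + ε →
      rho hp (pword p P Q) t =
        (A : ℝ) + (t - (A : ℝ)) * (p : ℝ) ^ (Q.count A) / (p : ℝ) ^ (P.count A) := by
  have hp2 : (2 : ℝ) ≤ (p : ℝ) := by exact_mod_cast hp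
  obtain ⟨ε1, hε1, hG1⟩ := rho_px_germ hp hsP hP
  obtain ⟨ε2, hε2, hG2⟩ := rho_px_germ_inv hp hsQ hQ
  have hpowQ : (0 : ℝ) < (p : ℝ) ^ (Q.count A) := by positivity
  refine ⟨min ε2 (ε1 / (p : ℝ) ^ (Q.count A)), by positivity, fun t ht1 ht2 => ?_⟩
  have hm1 : min ε2 (ε1 / (p : ℝ) ^ (Q.count A)) ≤ ε2 := min_le_left _ _
  have hm2 : min ε2 (ε1 / (p : ℝ) ^ (Q.count A)) ≤ ε1 / (p : ℝ) ^ (Q.count A) :=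
    min_le_right _ _
  have hword : rho hp (pword p P Q) t =
      rho hp (px p P) ((rho hp (px p Q))⁻¹ t) := by
    unfold pword
    rw [map_mul, map_inv, Equiv.Perm.mul_apply]
  rw [hword, hG2 t ht1 (by linarith)]
  set v : ℝ := (A : ℝ) + (t - (A : ℝ)) * (p : ℝ) ^ (Q.count A) with hv
  have hv1 : (A : ℝ) < v := by
    have : 0 < (t - (A : ℝ)) * (p : ℝ) ^ (Q.count A) := mul_pos (by linarith) hpowQ
    simp only [hv]; linarith
  have hv2 : v < (A : ℝ) + ε1 := by
    have h3 : (t - (A : ℝ)) * (p : ℝ) ^ (Q.count A) <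
        (ε1 / (p : ℝ) ^ (Q.count A)) * (p : ℝ) ^ (Q.count A) :=
      mul_lt_mul_of_pos_right (by linarith) hpowQ
    have h4 : (ε1 / (p : ℝ) ^ (Q.count A)) * (p : ℝ) ^ (Q.count A) = ε1 :=
      div_mul_cancel₀ _ (ne_of_gt hpowQ)
    rw [h4] at h3
    simp only [hv]; linarith
  rw [hG1 v hv1 hv2]
  simp only [hv]
  ring

/-- Germ comparison: if two words supported on indices `≥ A` are equal in `FP p` then
the `A`-exponent data agree. -/
theorem count_balance (hp : 2 ≤ p) {A : ℕ} {P Q P' Q' : List ℕ}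
    (hsP : P.Pairwise (· ≤ ·)) (hsQ : Q.Pairwise (· ≤ ·))
    (hsP' : P'.Pairwise (· ≤ ·)) (hsQ' : Q'.Pairwise (· ≤ ·))
    (hP : ∀ c ∈ P, A ≤ c) (hQ : ∀ c ∈ Q, A ≤ c)
    (hP' : ∀ c ∈ P', A ≤ c) (hQ' : ∀ c ∈ Q', A ≤ c)
    (hw : pword p P Q = pword p P' Q') :
    Q.count A + P'.count A = Q'.count A + P.count A := by
  have hp2 : (2 : ℝ) ≤ (p : ℝ) := by exact_mod_cast hp
  obtain ⟨ε1, hε1, hG1⟩ := rho_word_germ hp hsP hsQ hP hQ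
  obtain ⟨ε2, hε2, hG2⟩ := rho_word_germ hp hsP' hsQ' hP' hQ'
  set t : ℝ := (A : ℝ) + min ε1 ε2 / 2 with htdef
  have hpos : 0 < min ε1 ε2 / 2 := by positivity
  have ht1 : (A : ℝ) < t := by simp only [htdef]; linarith
  have ht2 : t < (A : ℝ) + ε1 := by
    have := min_le_left ε1 ε2; simp only [htdef]; linarith
  have ht3 : t < (A : ℝ) + ε2 := by
    have := min_le_right ε1 ε2; simp only [htdef]; linarith
  have happ : rho hp (pword p P Q) t = rho hp (pword p P' Q') t := by rw [hw]
  rw [hG1 t ht1 ht2, hG2 t ht1 ht3] at happ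
  have htA : t - (A : ℝ) = min ε1 ε2 / 2 := by simp only [htdef]; ring
  have hne : t - (A : ℝ) ≠ 0 := by rw [htA]; exact ne_of_gt hpos
  have hp0 : (0:ℝ) < (p:ℝ) := by linarith
  have heq2 : (p : ℝ) ^ (Q.count A) * (p : ℝ) ^ (P'.count A) =
      (p : ℝ) ^ (Q'.count A) * (p : ℝ) ^ (P.count A) := by
    have hPpos : (0:ℝ) < (p : ℝ) ^ (P.count A) := by positivity
    have hP'pos : (0:ℝ) < (p : ℝ) ^ (P'.count A) := by positivity
    field_simp at happ
    -- happ : (t - A) * p^{cQ} * p^{cP'} = (t - A) * p^{cQ'} * p^{cP}  (up to arrangement)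
    nlinarith [happ, hpos, htA]
  rw [← pow_add, ← pow_add] at heq2
  have hinj : ∀ m k : ℕ, (p : ℝ) ^ m = (p : ℝ) ^ k → m = k := by
    intro m k hmk
    by_contra hne'
    rcases Nat.lt_or_ge m k with hlt | hge
    · have := pow_lt_pow_right₀ (show (1:ℝ) < (p:ℝ) by linarith) hlt
      linarith
    · have hlt : k < m := by omega
      have := pow_lt_pow_right₀ (show (1:ℝ) < (p:ℝ) by linarith) hlt
      linarith
  exact hinj _ _ heq2


/-! ### Uniqueness of normal forms, list level -/

theorem px_replicate {A n : ℕ} : px p (List.replicate n A) = (xg p A) ^ n := by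
  induction n with
  | zero => simp
  | succ n ih => rw [List.replicate_succ, px_cons, ih, ← pow_succ']

theorem exists_min_of_ne_nil {L : List ℕ} (h : L ≠ []) :
    ∃ A ∈ L, ∀ b ∈ L, A ≤ b := by
  induction L with
  | nil => exact absurd rfl h
  | cons c T ih =>
      by_cases hT : T = []
      · subst hT
        exact ⟨c, by simp, by simp⟩
      · obtain ⟨A, hA, hle⟩ := ih hT
        rcases le_total A c with h1 | h1
        · exact ⟨A, by simp [hA], fun b hb => by
            rcases List.mem_cons.1 hb with rfl | hb
            · exact h1
            · exact hle b hb⟩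
        · exact ⟨c, by simp, fun b hb => by
            rcases List.mem_cons.1 hb with rfl | hb
            · exact le_refl b
            · exact le_trans h1 (hle b hb)⟩

theorem head_eq_of_min {P : List ℕ} {A : ℕ} (hs : P.Pairwise (· ≤ ·)) (hmem : A ∈ P)
    (hge : ∀ x ∈ P, A ≤ x) : ∃ T, P = A :: T := by
  cases P with
  | nil => simp at hmem
  | cons c T =>
      rw [List.pairwise_cons] at hs
      have h1 : A ≤ c := hge c (by simp)
      rcases List.mem_cons.1 hmem with rfl | hmem'
      · exact ⟨T, rfl⟩
      · have h2 : c ≤ A := hs.1 A hmem'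
        have : c = A := le_antisymm h2 h1
        exact ⟨T, by rw [this]⟩

theorem block_decomp {P : List ℕ} {A : ℕ} (hs : P.Pairwise (· ≤ ·))
    (hge : ∀ x ∈ P, A ≤ x) :
    ∃ P₂, P = List.replicate (P.count A) A ++ P₂ ∧ (∀ x ∈ P₂, A < x) ∧
      P₂.Pairwise (· ≤ ·) := by
  induction P with
  | nil => exact ⟨[], by simp, by simp, by simp⟩
  | cons c T ih =>
      rw [List.pairwise_cons] at hs
      obtain ⟨hcT, hT⟩ := hs
      rcases eq_or_lt_of_le (hge c (by simp)) with hAc | hAc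
      · subst hAc
        obtain ⟨T₂, hdec, hgt, hsT₂⟩ := ih hT hcT
        refine ⟨T₂, ?_, hgt, hsT₂⟩
        have hc : (A :: T).count A = T.count A + 1 := by simp [List.count_cons]
        rw [hc, List.replicate_succ, List.cons_append, ← hdec]
      · have hcnt : (c :: T).count A = 0 := by
          rw [List.count_eq_zero]
          intro hmem
          rcases List.mem_cons.1 hmem with h' | h'
          · omega
          · have := hcT A h'; omega
        refine ⟨c :: T, by rw [hcnt]; simp, ?_, List.pairwise_cons.2 ⟨hcT, hT⟩⟩
        intro x hx
        rcases List.mem_cons.1 hx with rfl | hx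
        · exact hAc
        · exact lt_of_lt_of_le hAc (hcT x hx)

theorem no_mixed_aux (hp : 2 ≤ p) (N : ℕ)
    (ih : ∀ M < N, ∀ P Q P' Q' : List ℕ,
      P.length + Q.length + P'.length + Q'.length ≤ M →
      Norm p P Q → Norm p P' Q' → pword p P Q = pword p P' Q' → P = P' ∧ Q = Q')
    {A : ℕ} {P Q P' Q' : List ℕ}
    (hlen : P.length + Q.length + P'.length + Q'.length ≤ N)
    (hn : Norm p P Q) (hn' : Norm p P' Q')
    (hPge : ∀ c ∈ P, A ≤ c) (hQge : ∀ c ∈ Q, A ≤ c)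
    (hP'ge : ∀ c ∈ P', A ≤ c) (hQ'ge : ∀ c ∈ Q', A ≤ c)
    (hw : pword p P Q = pword p P' Q')
    (hAP : P.count A ≠ 0) (hAP' : P'.count A = 0) : False := by
  obtain ⟨hsP, hsQ, hred⟩ := hn
  obtain ⟨hsP', hsQ', hred'⟩ := hn'
  have hbal := count_balance hp hsP hsQ hsP' hsQ' hPge hQge hP'ge hQ'ge hw
  have hcQ : Q.count A = P.count A + Q'.count A := by omega
  have hAPmem : A ∈ P := by
    by_contra h; exact hAP (List.count_eq_zero.2 h)
  have hAQmem : A ∈ Q := by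
    by_contra h
    have := List.count_eq_zero.2 h
    omega
  obtain ⟨b, hb1, hb2, hb3⟩ := hred A hAPmem hAQmem
  obtain ⟨P₂, hPdec, hP₂gt, hsP₂⟩ := block_decomp hsP hPge
  obtain ⟨Q₂, hQdec, hQ₂gt, hsQ₂⟩ := block_decomp hsQ hQge
  obtain ⟨Q₂', hQ'dec, hQ₂'gt, hsQ₂'⟩ := block_decomp hsQ' hQ'ge
  have hP'gt : ∀ c ∈ P', A < c := by
    intro c hc
    rcases eq_or_lt_of_le (hP'ge c hc) with rfl | h
    · exact absurd (List.count_eq_zero.1 hAP') (by simp [hc])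
    · exact h
  have hpxP : px p P = (xg p A) ^ P.count A * px p P₂ := by
    conv_lhs => rw [hPdec]
    rw [px_append, px_replicate]
  have hpxQ : px p Q = (xg p A) ^ Q.count A * px p Q₂ := by
    conv_lhs => rw [hQdec]
    rw [px_append, px_replicate]
  have hpxQ' : px p Q' = (xg p A) ^ Q'.count A * px p Q₂' := by
    conv_lhs => rw [hQ'dec]
    rw [px_append, px_replicate]
  have h1 : pword p P Q = (xg p A) ^ P.count A * pword p P₂ Q₂ * ((xg p A) ^ Q.count A)⁻¹ := by
    unfold pword; rw [hpxP, hpxQ]; group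
  have h2 : pword p P' Q' = pword p P' Q₂' * ((xg p A) ^ Q'.count A)⁻¹ := by
    unfold pword; rw [hpxQ']; group
  rw [h1, h2, hcQ, pow_add] at hw
  have h4 : (xg p A) ^ P.count A * pword p P₂ Q₂ * ((xg p A) ^ P.count A)⁻¹ = pword p P' Q₂' := by
    calc (xg p A) ^ P.count A * pword p P₂ Q₂ * ((xg p A) ^ P.count A)⁻¹
        = ((xg p A) ^ P.count A * pword p P₂ Q₂ *
            ((xg p A) ^ P.count A * (xg p A) ^ Q'.count A)⁻¹) * (xg p A) ^ Q'.count A := by group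
      _ = (pword p P' Q₂' * ((xg p A) ^ Q'.count A)⁻¹) * (xg p A) ^ Q'.count A := by rw [hw]
      _ = pword p P' Q₂' := by group
  have key : pword p P₂ Q₂ = (xg p A)⁻¹ ^ P.count A * pword p P' Q₂' * (xg p A) ^ P.count A := by
    rw [inv_pow, ← h4]; group
  have key2 := pword_conj_pow hp (a := A) (P := P') (Q := Q₂') (P.count A) hP'gt hQ₂'gt
  rw [key2] at key
  -- Apply the induction hypothesis.
  have hKpos : p - 1 ≤ P.count A * (p - 1) :=
    Nat.le_mul_of_pos_left _ (Nat.pos_of_ne_zero hAP)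
  have hmemP₂ : ∀ x ∈ P₂, x ∈ P := by
    intro x hx; rw [hPdec]; simp [hx]
  have hmemQ₂ : ∀ x ∈ Q₂, x ∈ Q := by
    intro x hx; rw [hQdec]; simp [hx]
  have hmemQ₂' : ∀ x ∈ Q₂', x ∈ Q' := by
    intro x hx; rw [hQ'dec]; simp [hx]
  have hnorm1 : Norm p P₂ Q₂ := by
    refine ⟨hsP₂, hsQ₂, ?_⟩
    intro a ha1 ha2
    obtain ⟨c, hc1, hc2, hc3⟩ := hred a (hmemP₂ a ha1) (hmemQ₂ a ha2)
    have hagt : A < a := hP₂gt a ha1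
    refine ⟨c, hc1, hc2, ?_⟩
    rcases hc3 with h | h
    · left
      rw [hPdec] at h
      rcases List.mem_append.1 h with h' | h'
      · have := List.eq_of_mem_replicate h'; omega
      · exact h'
    · right
      rw [hQdec] at h
      rcases List.mem_append.1 h with h' | h'
      · have := List.eq_of_mem_replicate h'; omega
      · exact h'
  have hnorm2 : Norm p (P'.map (· + P.count A * (p - 1))) (Q₂'.map (· + P.count A * (p - 1))) := by
    refine ⟨sorted_map_add hsP', sorted_map_add hsQ₂', ?_⟩
    intro a ha1 ha2
    obtain ⟨c, hc1, hce⟩ := List.mem_map.1 ha1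
    replace hce : c + P.count A * (p - 1) = a := hce
    obtain ⟨d, hd1, hde⟩ := List.mem_map.1 ha2
    replace hde : d + P.count A * (p - 1) = a := hde
    have hcd : c = d := by omega
    subst hcd
    obtain ⟨e, he1, he2, he3⟩ := hred' c hc1 (hmemQ₂' c hd1)
    refine ⟨e + P.count A * (p - 1), by omega, by omega, ?_⟩
    have hegt : A < e := lt_of_le_of_lt (hP'ge c hc1) he1
    rcases he3 with h | h
    · exact Or.inl (List.mem_map.2 ⟨e, h, rfl⟩)
    · right
      apply List.mem_map.2
      refine ⟨e, ?_, rfl⟩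
      rw [hQ'dec] at h
      rcases List.mem_append.1 h with h' | h'
      · have := List.eq_of_mem_replicate h'; omega
      · exact h'
  have hlen2 : P₂.length + Q₂.length + (P'.map (· + P.count A * (p - 1))).length +
      (Q₂'.map (· + P.count A * (p - 1))).length ≤ N - 1 := by
    have l1 : P.length = P.count A + P₂.length := by
      conv_lhs => rw [hPdec]
      simp
    have l2 : Q.length = Q.count A + Q₂.length := by
      conv_lhs => rw [hQdec]
      simp
    have l3 : Q'.length = Q'.count A + Q₂'.length := by
      conv_lhs => rw [hQ'dec]
      simp
    simp only [List.length_map]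
    have hcP1 : 1 ≤ P.count A := Nat.pos_of_ne_zero hAP
    omega
  have hN1 : N - 1 < N := by
    have : 1 ≤ P.length := by
      cases P with
      | nil => simp at hAPmem
      | cons _ _ => simp
    omega
  obtain ⟨hPeq, hQeq⟩ := ih (N - 1) hN1 _ _ _ _ hlen2 hnorm1 hnorm2 key
  -- Derive the contradiction from the witness b.
  have hbAne : b ≠ A := by omega
  have hbig : ∀ x, (x ∈ P₂ ∨ x ∈ Q₂) → A + (p - 1) < x := by
    intro x hx
    have hx' : x ∈ P'.map (· + P.count A * (p - 1)) ∨
        x ∈ Q₂'.map (· + P.count A * (p - 1)) := by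
      rcases hx with h | h
      · exact Or.inl (hPeq ▸ h)
      · exact Or.inr (hQeq ▸ h)
    rcases hx' with h | h
    · obtain ⟨c, hc1, hce⟩ := List.mem_map.1 h
      replace hce : c + P.count A * (p - 1) = x := hce
      have := hP'gt c hc1
      omega
    · obtain ⟨c, hc1, hce⟩ := List.mem_map.1 h
      replace hce : c + P.count A * (p - 1) = x := hce
      have := hQ₂'gt c hc1
      omega
  rcases hb3 with h | h
  · rw [hPdec] at h
    rcases List.mem_append.1 h with h' | h'
    · exact hbAne (List.eq_of_mem_replicate h')
    · have := hbig b (Or.inl h'); omega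
  · rw [hQdec] at h
    rcases List.mem_append.1 h with h' | h'
    · exact hbAne (List.eq_of_mem_replicate h')
    · have := hbig b (Or.inr h'); omega

/-- Uniqueness of normal forms at the level of lists. -/
theorem pword_unique (hp : 2 ≤ p) :
    ∀ N (P Q P' Q' : List ℕ),
      P.length + Q.length + P'.length + Q'.length ≤ N →
      Norm p P Q → Norm p P' Q' → pword p P Q = pword p P' Q' →
      P = P' ∧ Q = Q' := by
  intro N
  induction N using Nat.strong_induction_on with
  | _ N ih =>
    intro P Q P' Q' hlen hn hn' hw
    by_cases hnil : P ++ Q ++ P' ++ Q' = []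
    · rw [List.append_eq_nil_iff, List.append_eq_nil_iff, List.append_eq_nil_iff] at hnil
      obtain ⟨⟨⟨e1, e2⟩, e3⟩, e4⟩ := hnil
      exact ⟨by rw [e1, e3], by rw [e2, e4]⟩
    · obtain ⟨A, hAmem, hAle⟩ := exists_min_of_ne_nil hnil
      have hPge : ∀ c ∈ P, A ≤ c := fun c hc => hAle c (by simp [hc])
      have hQge : ∀ c ∈ Q, A ≤ c := fun c hc => hAle c (by simp [hc])
      have hP'ge : ∀ c ∈ P', A ≤ c := fun c hc => hAle c (by simp [hc])
      have hQ'ge : ∀ c ∈ Q', A ≤ c := fun c hc => hAle c (by simp [hc])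
      obtain ⟨hsP, hsQ, hred⟩ := hn
      obtain ⟨hsP', hsQ', hred'⟩ := hn'
      have hbal := count_balance hp hsP hsQ hsP' hsQ' hPge hQge hP'ge hQ'ge hw
      by_cases hP0 : P.count A = 0
      · by_cases hP'0 : P'.count A = 0
        · -- A occurs only in the negative parts.
          have hnP : A ∉ P := List.count_eq_zero.1 hP0
          have hnP' : A ∉ P' := List.count_eq_zero.1 hP'0
          have hmem4 : A ∈ P ∨ A ∈ Q ∨ A ∈ P' ∨ A ∈ Q' := by
            simpa [List.mem_append, or_assoc] using hAmem
          have hAQ : A ∈ Q ∧ A ∈ Q' := by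
            have hiff : A ∈ Q ↔ A ∈ Q' := by
              constructor
              · intro h
                by_contra h'
                have := List.count_eq_zero.2 h'
                have := List.count_eq_zero.1 (show Q.count A = 0 by omega)
                exact this h
              · intro h
                by_contra h'
                have := List.count_eq_zero.2 h'
                have := List.count_eq_zero.1 (show Q'.count A = 0 by omega)
                exact this h
            rcases hmem4 with h | h | h | h
            · exact absurd h hnP
            · exact ⟨h, hiff.1 h⟩
            · exact absurd h hnP'
            · exact ⟨hiff.2 h, h⟩
          obtain ⟨T, hTeq⟩ := head_eq_of_min hsQ hAQ.1 hQge
          obtain ⟨T', hTeq'⟩ := head_eq_of_min hsQ' hAQ.2 hQ'ge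
          have e1 : pword p P Q = pword p P T * (xg p A)⁻¹ := by
            rw [hTeq]; unfold pword; rw [px_cons]; group
          have e2 : pword p P' Q' = pword p P' T' * (xg p A)⁻¹ := by
            rw [hTeq']; unfold pword; rw [px_cons]; group
          rw [e1, e2] at hw
          have hw2 : pword p P T = pword p P' T' := mul_right_cancel hw
          have hsT : T.Pairwise (· ≤ ·) := (List.pairwise_cons.1 (hTeq ▸ hsQ)).2
          have hsT' : T'.Pairwise (· ≤ ·) := (List.pairwise_cons.1 (hTeq' ▸ hsQ')).2
          have hnormT : Norm p P T := by
            refine ⟨hsP, hsT, ?_⟩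
            intro a ha1 ha2
            obtain ⟨c, hc1, hc2, hc3⟩ := hred a ha1 (by rw [hTeq]; simp [ha2])
            have haA : a ≠ A := fun h => hnP (h ▸ ha1)
            have haA' : A < a := lt_of_le_of_ne (hPge a ha1) (Ne.symm haA)
            refine ⟨c, hc1, hc2, ?_⟩
            rcases hc3 with h | h
            · exact Or.inl h
            · right
              rw [hTeq] at h
              rcases List.mem_cons.1 h with rfl | h'
              · omega
              · exact h'
          have hnormT' : Norm p P' T' := by
            refine ⟨hsP', hsT', ?_⟩
            intro a ha1 ha2
            obtain ⟨c, hc1, hc2, hc3⟩ := hred' a ha1 (by rw [hTeq']; simp [ha2])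
            have haA : a ≠ A := fun h => hnP' (h ▸ ha1)
            have haA' : A < a := lt_of_le_of_ne (hP'ge a ha1) (Ne.symm haA)
            refine ⟨c, hc1, hc2, ?_⟩
            rcases hc3 with h | h
            · exact Or.inl h
            · right
              rw [hTeq'] at h
              rcases List.mem_cons.1 h with rfl | h'
              · omega
              · exact h'
          have hlen2 : P.length + T.length + P'.length + T'.length ≤ N - 1 := by
            have l1 : Q.length = T.length + 1 := by rw [hTeq]; simp
            have l2 : Q'.length = T'.length + 1 := by rw [hTeq']; simp
            omega
          have hN1 : N - 1 < N := by
            have : 1 ≤ Q.length := by rw [hTeq]; simp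
            omega
          obtain ⟨hPP', hTT'⟩ := ih (N - 1) hN1 _ _ _ _ hlen2 hnormT hnormT' hw2
          exact ⟨hPP', by rw [hTeq, hTeq', hTT']⟩
        · exact absurd (no_mixed_aux hp N
            (fun M hM R S R' S' hl h1 h2 h3 =>
              (ih M hM R' S' R S (by omega) h2 h1 h3.symm).imp Eq.symm Eq.symm)
            (by omega : P'.length + Q'.length + P.length + Q.length ≤ N)
            ⟨hsP', hsQ', hred'⟩ ⟨hsP, hsQ, hred⟩ hP'ge hQ'ge hPge hQge hw.symm
            hP'0 hP0) (fun h => h)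
      · by_cases hP'0 : P'.count A = 0
        · exact absurd (no_mixed_aux hp N ih hlen ⟨hsP, hsQ, hred⟩ ⟨hsP', hsQ', hred'⟩
            hPge hQge hP'ge hQ'ge hw hP0 hP'0) (fun h => h)
        · -- A occurs at the head of both positive parts.
          have hAPmem : A ∈ P := by
            by_contra h; exact hP0 (List.count_eq_zero.2 h)
          have hAP'mem : A ∈ P' := by
            by_contra h; exact hP'0 (List.count_eq_zero.2 h)
          obtain ⟨T, hTeq⟩ := head_eq_of_min hsP hAPmem hPge
          obtain ⟨T', hTeq'⟩ := head_eq_of_min hsP' hAP'mem hP'ge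
          have e1 : pword p P Q = xg p A * pword p T Q := by
            rw [hTeq]; unfold pword; rw [px_cons]; group
          have e2 : pword p P' Q' = xg p A * pword p T' Q' := by
            rw [hTeq']; unfold pword; rw [px_cons]; group
          rw [e1, e2] at hw
          have hw2 : pword p T Q = pword p T' Q' := mul_left_cancel hw
          have hsT : T.Pairwise (· ≤ ·) := (List.pairwise_cons.1 (hTeq ▸ hsP)).2
          have hsT' : T'.Pairwise (· ≤ ·) := (List.pairwise_cons.1 (hTeq' ▸ hsP')).2
          have hnormT : Norm p T Q := by
            refine ⟨hsT, hsQ, ?_⟩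
            intro a ha1 ha2
            obtain ⟨c, hc1, hc2, hc3⟩ := hred a (by rw [hTeq]; simp [ha1]) ha2
            have haA : A ≤ a := hQge a ha2
            refine ⟨c, hc1, hc2, ?_⟩
            rcases hc3 with h | h
            · left
              rw [hTeq] at h
              rcases List.mem_cons.1 h with rfl | h'
              · omega
              · exact h'
            · exact Or.inr h
          have hnormT' : Norm p T' Q' := by
            refine ⟨hsT', hsQ', ?_⟩
            intro a ha1 ha2
            obtain ⟨c, hc1, hc2, hc3⟩ := hred' a (by rw [hTeq']; simp [ha1]) ha2
            have haA : A ≤ a := hQ'ge a ha2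
            refine ⟨c, hc1, hc2, ?_⟩
            rcases hc3 with h | h
            · left
              rw [hTeq'] at h
              rcases List.mem_cons.1 h with rfl | h'
              · omega
              · exact h'
            · exact Or.inr h
          have hlen2 : T.length + Q.length + T'.length + Q'.length ≤ N - 1 := by
            have l1 : P.length = T.length + 1 := by rw [hTeq]; simp
            have l2 : P'.length = T'.length + 1 := by rw [hTeq']; simp
            omega
          have hN1 : N - 1 < N := by
            have : 1 ≤ P.length := by rw [hTeq]; simp
            omega
          obtain ⟨hTT', hQQ'⟩ := ih (N - 1) hN1 _ _ _ _ hlen2 hnormT hnormT' hw2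
          exact ⟨by rw [hTeq, hTeq', hTT'], hQQ'⟩


/-! ### Translation between `NFData` and sorted list pairs -/

/-- The positive part of a normal form datum, as a list. -/
def flatP (d : NFData p) : List ℕ :=
  (List.ofFn fun k => List.replicate (d.r k) (d.i k)).flatten

/-- The negative part of a normal form datum, as a list. -/
def flatQ (d : NFData p) : List ℕ :=
  (List.ofFn fun l => List.replicate (d.s l) (d.j l)).flatten

theorem px_flatten {S : List (List ℕ)} : px p S.flatten = (S.map (px p)).prod := by
  induction S with
  | nil => simp
  | cons l S ih => rw [List.flatten_cons, px_append, List.map_cons, List.prod_cons, ih]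

theorem px_flat {n : ℕ} (i r : Fin n → ℕ) :
    px p (List.ofFn fun k => List.replicate (r k) (i k)).flatten =
      (List.ofFn fun k => xg p (i k) ^ r k).prod := by
  rw [px_flatten, List.map_ofFn]
  exact congrArg List.prod (congrArg List.ofFn (funext fun k => px_replicate))

theorem elem_eq_pword (d : NFData p) : d.elem = pword p (flatP d) (flatQ d) := by
  unfold NFData.elem pword flatP flatQ
  rw [px_flat, px_flat]

theorem mem_flat {n : ℕ} {i r : Fin n → ℕ} (hr : ∀ k, 1 ≤ r k) {a : ℕ} :
    a ∈ (List.ofFn fun k => List.replicate (r k) (i k)).flatten ↔ ∃ k, i k = a := by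
  rw [List.mem_flatten]
  constructor
  · rintro ⟨l, hl, hal⟩
    obtain ⟨k, hk⟩ := List.mem_ofFn.1 hl
    refine ⟨k, ?_⟩
    have := List.eq_of_mem_replicate (hk ▸ hal)
    omega
  · rintro ⟨k, rfl⟩
    refine ⟨List.replicate (r k) (i k), List.mem_ofFn.2 ⟨k, rfl⟩, ?_⟩
    exact List.mem_replicate.2 ⟨by have := hr k; omega, rfl⟩

theorem pairwise_replicate_le {m a : ℕ} : (List.replicate m a).Pairwise (· ≤ ·) := by
  induction m with
  | zero => simp
  | succ m ih =>
      rw [List.replicate_succ]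
      refine List.pairwise_cons.2 ⟨fun b hb => ?_, ih⟩
      rw [List.eq_of_mem_replicate hb]

theorem sorted_flat {n : ℕ} {i r : Fin n → ℕ} (hi : StrictMono i) :
    ((List.ofFn fun k => List.replicate (r k) (i k)).flatten).Pairwise (· ≤ ·) := by
  refine List.pairwise_flatten.2 ⟨?_, ?_⟩
  · intro l hl
    obtain ⟨k, hk⟩ := List.mem_ofFn.1 hl
    rw [← hk]
    exact pairwise_replicate_le
  · refine List.pairwise_ofFn.2 ?_
    intro k l hkl x hx y hy
    rw [List.eq_of_mem_replicate hx, List.eq_of_mem_replicate hy]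
    exact le_of_lt (hi hkl)

theorem count_flat {n : ℕ} (i r : Fin n → ℕ) (a : ℕ) :
    ((List.ofFn fun k => List.replicate (r k) (i k)).flatten).count a =
      ∑ k, if i k = a then r k else 0 := by
  rw [List.count_flatten, List.map_ofFn, ← List.sum_ofFn]
  refine congrArg List.sum (congrArg List.ofFn (funext fun k => ?_))
  simp [Function.comp, List.count_replicate]

theorem count_flat_at {n : ℕ} {i r : Fin n → ℕ} (hi : Function.Injective i) (k₀ : Fin n) :
    ((List.ofFn fun k => List.replicate (r k) (i k)).flatten).count (i k₀) = r k₀ := by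
  rw [count_flat]
  rw [Finset.sum_congr rfl (fun k _ => by
    rw [show (if i k = i k₀ then r k else 0) = if k = k₀ then r k else 0 by
      simp [hi.eq_iff]])]
  simp

theorem strictMono_ext {n : ℕ} {f g : Fin n → ℕ} (hf : StrictMono f) (hg : StrictMono g)
    (h : ∀ a, (∃ k, f k = a) ↔ ∃ k, g k = a) : f = g := by
  have himg : Finset.univ.image f = Finset.univ.image g := by
    apply Finset.ext
    intro a
    simp only [Finset.mem_image, Finset.mem_univ, true_and]
    exact h a
  have hcard : (Finset.univ.image f).card = n := by
    rw [Finset.card_image_of_injective _ hf.injective, Finset.card_univ, Fintype.card_fin]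
  have h1 := Finset.orderEmbOfFin_unique hcard
    (fun x => Finset.mem_image_of_mem f (Finset.mem_univ x)) hf
  have h2 := Finset.orderEmbOfFin_unique hcard
    (fun x => by rw [himg]; exact Finset.mem_image_of_mem g (Finset.mem_univ x)) hg
  funext x
  rw [show f x = (fun x => f x) x from rfl, h1, h2]

theorem card_range_eq {n n' : ℕ} {f : Fin n → ℕ} {g : Fin n' → ℕ}
    (hf : Function.Injective f) (hg : Function.Injective g)
    (h : ∀ a, (∃ k, f k = a) ↔ ∃ k, g k = a) : n = n' := by
  have himg : Finset.univ.image f = Finset.univ.image g := by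
    apply Finset.ext
    intro a
    simp only [Finset.mem_image, Finset.mem_univ, true_and]
    exact h a
  calc n = (Finset.univ.image f).card := by
        rw [Finset.card_image_of_injective _ hf, Finset.card_univ, Fintype.card_fin]
    _ = (Finset.univ.image g).card := by rw [himg]
    _ = n' := by rw [Finset.card_image_of_injective _ hg, Finset.card_univ, Fintype.card_fin]


theorem mem_flatP {d : NFData p} (hr : ∀ k, 1 ≤ d.r k) {a : ℕ} :
    a ∈ flatP d ↔ ∃ k, d.i k = a := mem_flat hr

theorem mem_flatQ {d : NFData p} (hs : ∀ l, 1 ≤ d.s l) {a : ℕ} :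
    a ∈ flatQ d ↔ ∃ l, d.j l = a := mem_flat hs

theorem nf_to_lists (hp : 2 ≤ p) {d : NFData p} {x : FP p} (hd : d.IsNormalFormOf x) :
    Norm p (flatP d) (flatQ d) ∧ pword p (flatP d) (flatQ d) = x := by
  obtain ⟨hi, hj, hr, hs, h5, h6, hx⟩ := hd
  constructor
  · refine ⟨sorted_flat hi, sorted_flat hj, ?_⟩
    intro a ha1 ha2
    obtain ⟨b, hb1, hb2, hb3⟩ := h6 a ((mem_flatP hr).1 ha1) ((mem_flatQ hs).1 ha2)
    refine ⟨b, hb1, by omega, ?_⟩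
    rcases hb3 with h | h
    · exact Or.inl ((mem_flatP hr).2 h)
    · exact Or.inr ((mem_flatQ hs).2 h)
  · rw [← elem_eq_pword, hx]

theorem side_recon {P : List ℕ} (hsP : P.Pairwise (· ≤ ·)) :
    ∃ (n : ℕ) (i : Fin n → ℕ) (r : Fin n → ℕ), StrictMono i ∧ (∀ k, 1 ≤ r k) ∧
      (List.ofFn fun k => List.replicate (r k) (i k)).flatten = P ∧
      (∀ a, (∃ k, i k = a) ↔ a ∈ P) := by
  set e := P.toFinset.orderEmbOfFin rfl with he
  have hmemP : ∀ k, (e k : ℕ) ∈ P := by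
    intro k
    exact List.mem_toFinset.1 (Finset.orderEmbOfFin_mem P.toFinset rfl k)
  have hiff : ∀ a, (∃ k, e k = a) ↔ a ∈ P := by
    intro a
    constructor
    · rintro ⟨k, rfl⟩; exact hmemP k
    · intro ha
      have h1 : a ∈ (P.toFinset : Set ℕ) := by
        simp only [Finset.coe_sort_coe, Finset.mem_coe]
        exact List.mem_toFinset.2 ha
      rw [← Finset.range_orderEmbOfFin P.toFinset rfl] at h1
      exact Set.mem_range.1 h1
  refine ⟨P.toFinset.card, ⇑e, fun k => P.count (e k), e.strictMono, ?_, ?_, hiff⟩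
  · intro k
    exact Nat.pos_of_ne_zero (fun h => (List.count_eq_zero.1 h) (hmemP k))
  · apply List.Perm.eq_of_pairwise' (sorted_flat e.strictMono) hsP
    apply List.perm_iff_count.2
    intro a
    by_cases ha : a ∈ P
    · obtain ⟨k₀, hk₀⟩ := (hiff a).2 ha
      rw [← hk₀]
      exact count_flat_at e.strictMono.injective k₀
    · have h1 : P.count a = 0 := List.count_eq_zero.2 ha
      rw [h1, count_flat]
      apply Finset.sum_eq_zero
      intro k _
      rw [if_neg]
      intro h
      exact ha (h ▸ hmemP k)

theorem lists_to_nf (hp : 2 ≤ p) {P Q : List ℕ} (hn : Norm p P Q) {x : FP p}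
    (hx : pword p P Q = x) :
    ∃ d : NFData p, d.IsNormalFormOf x ∧ flatP d = P ∧ flatQ d = Q := by
  obtain ⟨hsP, hsQ, hred⟩ := hn
  obtain ⟨n, i, r, hi, hr, hflP, hiffP⟩ := side_recon hsP
  obtain ⟨m, j, s, hj, hs, hflQ, hiffQ⟩ := side_recon hsQ
  have hfP : flatP (⟨n, m, i, r, j, s⟩ : NFData p) = P := hflP
  have hfQ : flatQ (⟨n, m, i, r, j, s⟩ : NFData p) = Q := hflQ
  refine ⟨⟨n, m, i, r, j, s⟩, ⟨hi, hj, hr, hs, ?_, ?_, ?_⟩, hfP, hfQ⟩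
  · intro hn0 hm0 heq
    dsimp only at heq hn0 hm0
    have haP : (i ⟨n - 1, Nat.sub_lt hn0 Nat.one_pos⟩) ∈ P := (hiffP _).1 ⟨_, rfl⟩
    have haQ : (i ⟨n - 1, Nat.sub_lt hn0 Nat.one_pos⟩) ∈ Q :=
      (hiffQ _).1 ⟨⟨m - 1, Nat.sub_lt hm0 Nat.one_pos⟩, heq.symm⟩
    obtain ⟨b, hb1, _, hb3⟩ := hred _ haP haQ
    rcases hb3 with h | h
    · obtain ⟨kb, hkb⟩ := (hiffP b).2 h
      have hle : i kb ≤ i ⟨n - 1, Nat.sub_lt hn0 Nat.one_pos⟩ :=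
        hi.monotone (by have := kb.2; rw [Fin.le_def]; simp; omega)
      omega
    · obtain ⟨lb, hlb⟩ := (hiffQ b).2 h
      have hle : j lb ≤ j ⟨m - 1, Nat.sub_lt hm0 Nat.one_pos⟩ :=
        hj.monotone (by have := lb.2; rw [Fin.le_def]; simp; omega)
      rw [hlb, ← heq] at hle
      omega
  · rintro a ⟨k, hk⟩ ⟨l, hl⟩
    have haP : a ∈ P := (hiffP a).1 ⟨k, hk⟩
    have haQ : a ∈ Q := (hiffQ a).1 ⟨l, hl⟩
    obtain ⟨b, hb1, hb2, hb3⟩ := hred a haP haQ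
    refine ⟨b, hb1, by omega, ?_⟩
    rcases hb3 with h | h
    · exact Or.inl ((hiffP b).2 h)
    · exact Or.inr ((hiffQ b).2 h)
  · rw [← hx, elem_eq_pword, hfP, hfQ]

theorem nf_eq_of_flat {d d' : NFData p} {x x' : FP p}
    (hd : d.IsNormalFormOf x) (hd' : d'.IsNormalFormOf x')
    (hP : flatP d = flatP d') (hQ : flatQ d = flatQ d') : d = d' := by
  obtain ⟨n, m, i, r, j, s⟩ := d
  obtain ⟨n', m', i', r', j', s'⟩ := d'
  obtain ⟨hi, hj, hr, hs, -, -, -⟩ := hd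
  obtain ⟨hi', hj', hr', hs', -, -, -⟩ := hd'
  have hiffi : ∀ a, (∃ k, i k = a) ↔ ∃ k', i' k' = a := by
    intro a
    rw [← mem_flatP (d := ⟨n, m, i, r, j, s⟩) hr, ← mem_flatP (d := ⟨n', m', i', r', j', s'⟩) hr', hP]
  have hiffj : ∀ a, (∃ l, j l = a) ↔ ∃ l', j' l' = a := by
    intro a
    rw [← mem_flatQ (d := ⟨n, m, i, r, j, s⟩) hs, ← mem_flatQ (d := ⟨n', m', i', r', j', s'⟩) hs', hQ]
  have hnn : n = n' := card_range_eq hi.injective hi'.injective hiffi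
  subst hnn
  have hmm : m = m' := card_range_eq hj.injective hj'.injective hiffj
  subst hmm
  have hii : i = i' := strictMono_ext hi hi' hiffi
  subst hii
  have hjj : j = j' := strictMono_ext hj hj' hiffj
  subst hjj
  have hrr : r = r' := by
    funext k
    have h1 : (flatP (⟨n, m, i, r, j, s⟩ : NFData p)).count (i k) = r k :=
      count_flat_at hi.injective k
    have h2 : (flatP (⟨n, m, i, r', j, s'⟩ : NFData p)).count (i k) = r' k :=
      count_flat_at hi'.injective k
    rw [hP, h2] at h1
    omega
  subst hrr
  have hss : s = s' := by
    funext l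
    have h1 : (flatQ (⟨n, m, i, r, j, s⟩ : NFData p)).count (j l) = s l :=
      count_flat_at hj.injective l
    have h2 : (flatQ (⟨n, m, i, r, j, s'⟩ : NFData p)).count (j l) = s' l :=
      count_flat_at hj'.injective l
    rw [hQ, h2] at h1
    omega
  subst hss
  rfl

end S19
/-- Every element of `F(p)` has exactly one normal form. -/
theorem statement19 (p : ℕ) (hp : 2 ≤ p) (x : FP p) :
    ∃! d : NFData p, d.IsNormalFormOf x := by
  obtain ⟨P, Q, hn, hx⟩ := S19.exists_norm hp x
  obtain ⟨d, hd, hfP, hfQ⟩ := S19.lists_to_nf hp hn hx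
  refine ⟨d, hd, ?_⟩
  intro d' hd'
  obtain ⟨hnd', hxd'⟩ := S19.nf_to_lists hp hd'
  obtain ⟨hP', hQ'⟩ := S19.pword_unique hp
    ((S19.flatP d').length + (S19.flatQ d').length + P.length + Q.length)
    (S19.flatP d') (S19.flatQ d') P Q le_rfl hnd' hn (by rw [hxd', ← hx])
  exact S19.nf_eq_of_flat hd' hd (by rw [hP', hfP]) (by rw [hQ', hfQ])
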